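/- arXiv:math/0410395 — 8 statements merged into one kernel-verified Lean document; each statement's English description precedes it below -/
import Mathlib

section
/- Let f : [a,b] → ℝ (with a < b) be a function of bounded variation on [a,b]. Then the essential supremum of |f| on [a,b] satisfies ‖f‖_{[a,b],∞} ≤ (1/(b−a))·|∫_a^b f(t) dt| + V_a^b(f), where V_a^b(f) denotes the total variation of f on [a,b]. -/
open MeasureTheory Set

/-- **Theorem 1.** If `f : [a,b] → ℝ` is of bounded variation on `[a,b]` (`a < b`), then
`‖f‖_{[a,b],∞} ≤ (b-a)⁻¹ |∫_a^b f| + ⋁_a^b (f)`. -/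
theorem sup_norm_le_integral_mean_add_variation
    (a b : ℝ) (hab : a < b) (f : ℝ → ℝ)
    (hf : BoundedVariationOn f (Icc a b)) :
    eLpNorm f ⊤ (volume.restrict (Icc a b)) ≤
      ENNReal.ofReal ((b - a)⁻¹ * |∫ t in a..b, f t|) + eVariationOn f (Icc a b) := by
  obtain ⟨p, q, hp, hq, hpq⟩ :=
    hf.locallyBoundedVariationOn.exists_monotoneOn_sub_monotoneOn
  have huIcc : uIcc a b = Icc a b := uIcc_of_le hab.le
  have hint : IntervalIntegrable f volume a b := by
    rw [hpq]
    exact ((huIcc ▸ hp).intervalIntegrable).sub ((huIcc ▸ hq).intervalIntegrable)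
  set V : ℝ := (eVariationOn f (Icc a b)).toReal with hV
  have hVnn : 0 ≤ V := ENNReal.toReal_nonneg
  have hba : (0:ℝ) < b - a := by linarith
  have key : ∀ x ∈ Icc a b, |f x| ≤ (b - a)⁻¹ * |∫ t in a..b, f t| + V := by
    intro x hx
    have hdist : ∀ y ∈ Icc a b, |f x - f y| ≤ V := by
      intro y hy
      have := hf.dist_le hx hy
      rwa [Real.dist_eq] at this
    have hint2 : IntervalIntegrable (fun t => f x - f t) volume a b :=
      intervalIntegrable_const.sub hint
    have h1 : (b - a) * f x - ∫ t in a..b, f t = ∫ t in a..b, (f x - f t) := by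
      rw [intervalIntegral.integral_sub intervalIntegrable_const hint,
        intervalIntegral.integral_const, smul_eq_mul]
    have h2 : |∫ t in a..b, (f x - f t)| ≤ (b - a) * V := by
      calc |∫ t in a..b, (f x - f t)| ≤ ∫ t in a..b, |f x - f t| :=
            intervalIntegral.abs_integral_le_integral_abs hab.le
        _ ≤ ∫ t in a..b, V := by
            apply intervalIntegral.integral_mono_on hab.le hint2.abs
              intervalIntegrable_const
            intro t ht; exact hdist t ht
        _ = (b - a) * V := by rw [intervalIntegral.integral_const, smul_eq_mul]
    have h3 : (b - a) * |f x| ≤ |∫ t in a..b, f t| + (b - a) * V := by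
      have htri : |(b - a) * f x| ≤
          |(b - a) * f x - ∫ t in a..b, f t| + |∫ t in a..b, f t| := by
        calc |(b - a) * f x|
            = |((b - a) * f x - ∫ t in a..b, f t) + ∫ t in a..b, f t| := by ring_nf
          _ ≤ _ := abs_add_le _ _
      rw [h1] at htri
      rw [abs_mul, abs_of_pos hba] at htri
      linarith
    have h4 : (b - a) * |f x| ≤ (b - a) * ((b - a)⁻¹ * |∫ t in a..b, f t| + V) := by
      rw [mul_add, ← mul_assoc, mul_inv_cancel₀ hba.ne']
      linarith
    exact le_of_mul_le_mul_left h4 hba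
  have hb : eLpNorm f ⊤ (volume.restrict (Icc a b)) ≤
      ENNReal.ofReal ((b - a)⁻¹ * |∫ t in a..b, f t| + V) := by
    rw [eLpNorm_exponent_top]
    apply eLpNormEssSup_le_of_ae_bound (C := (b - a)⁻¹ * |∫ t in a..b, f t| + V)
    rw [ae_restrict_iff' measurableSet_Icc]
    exact Filter.Eventually.of_forall fun x hx => by
      simpa [Real.norm_eq_abs] using key x hx
  refine hb.trans ?_
  rw [ENNReal.ofReal_add (by positivity) hVnn, hV,
    ENNReal.ofReal_toReal hf]
end

section
/- Let f : [a,b] → ℝ (with a < b) be a function of bounded variation on [a,b] and let p ≥ 1. Then ‖f‖_{[a,b],p} ≤ (b−a)^{1/p − 1}·|∫_a^b f(t) dt| + (1/2)·(b−a)^{1/p}·(2^{p+1} − 1)^{1/p}·(p+1)^{−1/p}·V_a^b(f), where ‖f‖_{[a,b],p} = (∫_a^b |f(t)|^p dt)^{1/p} and V_a^b(f) is the total variation of f on [a,b]. -/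
open MeasureTheory Set

/-!
Splitting `(b - a) f(t) - ∫_a^b f = ∫_a^t (f(t) - f(s)) ds + ∫_t^b (f(t) - f(s)) ds` and bounding
each integrand by the variation over its subinterval gives
`|f(t)| ≤ |∫_a^b f| / (b - a) + V_a^b(f) · max (t - a) (b - t) / (b - a)` on `[a, b]`.
Minkowski's inequality in `L^p[a, b]` then bounds `‖f‖_p` by the norm of that constant, which is
`(b - a)^{1/p - 1} |∫_a^b f|`, plus the explicitly computable norm of the tent `max (t - a) (b - t)`.
-/

theorem LocallyBoundedVariationOn.integrableOn_isCompact {f : ℝ → ℝ} {s : Set ℝ}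
    {μ : Measure ℝ} [IsFiniteMeasureOnCompacts μ] (hf : LocallyBoundedVariationOn f s)
    (hs : IsCompact s) : IntegrableOn f s μ := by
  obtain ⟨g, h, hg, hh, rfl⟩ := hf.exists_monotoneOn_sub_monotoneOn
  exact (hg.integrableOn_isCompact hs).sub (hh.integrableOn_isCompact hs)

theorem LocallyBoundedVariationOn.intervalIntegrable {f : ℝ → ℝ} {a b : ℝ}
    {μ : Measure ℝ} [IsLocallyFiniteMeasure μ] (hf : LocallyBoundedVariationOn f (uIcc a b)) :
    IntervalIntegrable f μ a b :=
  (hf.integrableOn_isCompact isCompact_uIcc).intervalIntegrable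

theorem BoundedVariationOn.abs_integral_sub_le {f : ℝ → ℝ} {u v t : ℝ}
    (hf : BoundedVariationOn f (Icc u v)) (ht : t ∈ Icc u v) :
    |∫ s in u..v, (f t - f s)| ≤ (v - u) * (eVariationOn f (Icc u v)).toReal := by
  have hle : ∀ s ∈ uIoc u v, ‖f t - f s‖ ≤ (eVariationOn f (Icc u v)).toReal := fun s hs =>
    hf.dist_le ht (Ioc_subset_Icc_self (uIoc_of_le (ht.1.trans ht.2) ▸ hs))
  simpa [abs_of_nonneg (sub_nonneg.2 (ht.1.trans ht.2)), mul_comm] using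
    intervalIntegral.norm_integral_le_of_norm_le_const hle

theorem BoundedVariationOn.abs_mul_sub_integral_le {f : ℝ → ℝ} {a b t : ℝ}
    (hf : BoundedVariationOn f (Icc a b)) (ht : t ∈ Icc a b) :
    |(b - a) * f t - ∫ s in a..b, f s| ≤
      max (t - a) (b - t) * (eVariationOn f (Icc a b)).toReal := by
  have hsub₁ : Icc a t ⊆ Icc a b := Icc_subset_Icc_right ht.2
  have hsub₂ : Icc t b ⊆ Icc a b := Icc_subset_Icc_left ht.1
  have hfi : ∀ u v, Icc u v ⊆ Icc a b → u ≤ v → IntervalIntegrable f volume u v :=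
    fun u v h huv => (hf.mono (uIcc_of_le huv ▸ h)).locallyBoundedVariationOn.intervalIntegrable
  have hsplit : (b - a) * f t - ∫ s in a..b, f s =
      (∫ s in a..t, (f t - f s)) + ∫ s in t..b, (f t - f s) := by
    rw [intervalIntegral.integral_add_adjacent_intervals
      (intervalIntegrable_const.sub (hfi a t hsub₁ ht.1))
      (intervalIntegrable_const.sub (hfi t b hsub₂ ht.2)),
      intervalIntegral.integral_sub intervalIntegrable_const
      (hfi a b subset_rfl (ht.1.trans ht.2)), intervalIntegral.integral_const, smul_eq_mul]
  have hadd : (eVariationOn f (Icc a t)).toReal + (eVariationOn f (Icc t b)).toReal =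
      (eVariationOn f (Icc a b)).toReal := by
    have := eVariationOn.Icc_add_Icc f (s := univ) ht.1 ht.2 (mem_univ t)
    simp only [univ_inter] at this
    rw [← this, ENNReal.toReal_add (hf.mono hsub₁) (hf.mono hsub₂)]
  have h₁ := (hf.mono hsub₁).abs_integral_sub_le ⟨ht.1, le_rfl⟩
  have h₂ := (hf.mono hsub₂).abs_integral_sub_le ⟨le_rfl, ht.2⟩
  have hV₁ : 0 ≤ (eVariationOn f (Icc a t)).toReal := ENNReal.toReal_nonneg
  have hV₂ : 0 ≤ (eVariationOn f (Icc t b)).toReal := ENNReal.toReal_nonneg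
  rw [hsplit, ← hadd]
  calc _ ≤ _ := abs_add_le _ _
    _ ≤ _ := add_le_add h₁ h₂
    _ ≤ _ := by nlinarith [le_max_left (t - a) (b - t), le_max_right (t - a) (b - t)]

theorem ofReal_integral_rpow_eq_lintegral {α : Type*} [MeasurableSpace α] {μ : Measure α}
    {u : α → ℝ} {p : ℝ} (hp : 0 ≤ p) (hu : 0 ≤ᵐ[μ] u) (hup : Integrable (fun x => u x ^ p) μ) :
    ENNReal.ofReal (∫ x, u x ^ p ∂μ) = ∫⁻ x, ENNReal.ofReal (u x) ^ p ∂μ := by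
  rw [ofReal_integral_eq_lintegral_ofReal hup (hu.mono fun x hx => Real.rpow_nonneg hx p)]
  exact lintegral_congr_ae (hu.mono fun x hx => (ENNReal.ofReal_rpow_of_nonneg hx hp).symm)

theorem ofReal_integral_abs_rpow_le_lintegral {α : Type*} [MeasurableSpace α] {μ : Measure α}
    (g : α → ℝ) {p : ℝ} (hp : 0 ≤ p) :
    ENNReal.ofReal (∫ x, |g x| ^ p ∂μ) ≤ ∫⁻ x, ENNReal.ofReal |g x| ^ p ∂μ := by
  have h := enorm_integral_le_lintegral_enorm (μ := μ) fun x => |g x| ^ p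
  simp only [Real.enorm_eq_ofReal (integral_nonneg fun x => Real.rpow_nonneg (abs_nonneg _) p),
    Real.enorm_eq_ofReal (Real.rpow_nonneg (abs_nonneg _) p)] at h
  simpa only [ENNReal.ofReal_rpow_of_nonneg (abs_nonneg _) hp] using h

theorem integral_abs_rpow_rpow_inv_le_of_abs_le_add {α : Type*} [MeasurableSpace α]
    {μ : Measure α} {g u v : α → ℝ} {p : ℝ} (hp : 1 ≤ p)
    (hu : AEMeasurable u μ) (hv : AEMeasurable v μ) (hu0 : 0 ≤ᵐ[μ] u) (hv0 : 0 ≤ᵐ[μ] v)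
    (hup : Integrable (fun x => u x ^ p) μ) (hvp : Integrable (fun x => v x ^ p) μ)
    (hg : ∀ᵐ x ∂μ, |g x| ≤ u x + v x) :
    (∫ x, |g x| ^ p ∂μ) ^ p⁻¹ ≤ (∫ x, u x ^ p ∂μ) ^ p⁻¹ + (∫ x, v x ^ p ∂μ) ^ p⁻¹ := by
  have hp0 : 0 ≤ p := zero_le_one.trans hp
  have hg0 : 0 ≤ ∫ x, |g x| ^ p ∂μ := integral_nonneg fun x => Real.rpow_nonneg (abs_nonneg _) p
  have hu0' : 0 ≤ ∫ x, u x ^ p ∂μ :=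
    integral_nonneg_of_ae (hu0.mono fun x hx => Real.rpow_nonneg hx p)
  have hv0' : 0 ≤ ∫ x, v x ^ p ∂μ :=
    integral_nonneg_of_ae (hv0.mono fun x hx => Real.rpow_nonneg hx p)
  rw [← ENNReal.ofReal_le_ofReal_iff (by positivity), ENNReal.ofReal_add (by positivity)
    (by positivity), ← ENNReal.ofReal_rpow_of_nonneg hg0 (by positivity),
    ← ENNReal.ofReal_rpow_of_nonneg hu0' (by positivity),
    ← ENNReal.ofReal_rpow_of_nonneg hv0' (by positivity),
    ofReal_integral_rpow_eq_lintegral hp0 hu0 hup, ofReal_integral_rpow_eq_lintegral hp0 hv0 hvp,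
    ← one_div]
  calc ENNReal.ofReal (∫ x, |g x| ^ p ∂μ) ^ (1 / p)
      ≤ (∫⁻ x, ENNReal.ofReal |g x| ^ p ∂μ) ^ (1 / p) := by
        gcongr; exact ofReal_integral_abs_rpow_le_lintegral g hp0
    _ ≤ (∫⁻ x, (ENNReal.ofReal (u x) + ENNReal.ofReal (v x)) ^ p ∂μ) ^ (1 / p) := by
        gcongr 1
        refine lintegral_mono_ae ((hg.and (hu0.and hv0)).mono fun x ⟨hx, hux, hvx⟩ => ?_)
        rw [← ENNReal.ofReal_add hux hvx]
        gcongr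
    _ ≤ _ := ENNReal.lintegral_Lp_add_le hu.ennreal_ofReal hv.ennreal_ofReal hp

theorem half_sub_le_max_sub_sub (a b t : ℝ) : (b - a) / 2 ≤ max (t - a) (b - t) := by
  linarith [le_max_left (t - a) (b - t), le_max_right (t - a) (b - t)]

theorem integral_max_sub_rpow {a b p : ℝ} (hab : a < b) (hp : -1 < p) :
    ∫ t in a..b, max (t - a) (b - t) ^ p =
      ((b - a) / 2) ^ p * ((b - a) * (2 ^ (p + 1) - 1) / (p + 1)) := by
  set h := (b - a) / 2 with hh
  have hh0 : 0 < h := by rw [hh]; linarith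
  set c := (a + b) / 2 with hc
  have hcont : Continuous fun t => max (t - a) (b - t) ^ p :=
    (by fun_prop : Continuous fun t => max (t - a) (b - t)).rpow_const fun t =>
      Or.inl (hh0.trans_le (half_sub_le_max_sub_sub a b t)).ne'
  have hleft : ∫ t in a..c, max (t - a) (b - t) ^ p = ∫ x in h..2 * h, x ^ p := by
    rw [intervalIntegral.integral_congr (g := fun t => (b - t) ^ p) fun t ht => by
      rw [uIcc_of_le (by rw [hc]; linarith)] at ht
      rw [max_eq_right (by linarith [ht.2])]]
    simp only [intervalIntegral.integral_comp_sub_left fun x => x ^ p]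
    congr 1 <;> ring
  have hright : ∫ t in c..b, max (t - a) (b - t) ^ p = ∫ x in h..2 * h, x ^ p := by
    rw [intervalIntegral.integral_congr (g := fun t => (t - a) ^ p) fun t ht => by
      rw [uIcc_of_le (by rw [hc]; linarith)] at ht
      rw [max_eq_left (by linarith [ht.1])]]
    simp only [intervalIntegral.integral_comp_sub_right fun x => x ^ p]
    congr 1 <;> ring
  rw [← intervalIntegral.integral_add_adjacent_intervals (hcont.intervalIntegrable a c)
    (hcont.intervalIntegrable c b), hleft, hright, integral_rpow (Or.inl hp),
    Real.mul_rpow zero_le_two hh0.le, Real.rpow_add hh0, Real.rpow_one,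
    show b - a = 2 * h by rw [hh]; ring]
  have : p + 1 ≠ 0 := by linarith
  field_simp
  ring

theorem integral_mul_max_sub_rpow_rpow_inv {a b c p : ℝ} (hab : a < b) (hp : 0 < p)
    (hc : 0 ≤ c) :
    (∫ t in a..b, (c * max (t - a) (b - t)) ^ p) ^ p⁻¹ =
      (b - a) / 2 * ((b - a) ^ p⁻¹ * (2 ^ (p + 1) - 1) ^ p⁻¹ * (p + 1) ^ (-p⁻¹)) * c := by
  have hba : 0 ≤ b - a := by linarith
  have hmax : ∀ t, 0 ≤ max (t - a) (b - t) := fun t =>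
    (div_nonneg hba zero_le_two).trans (half_sub_le_max_sub_sub a b t)
  have h2 : 0 ≤ (2 : ℝ) ^ (p + 1) - 1 := by
    linarith [Real.one_le_rpow one_le_two (by linarith : 0 ≤ p + 1)]
  simp_rw [Real.mul_rpow hc (hmax _)]
  rw [intervalIntegral.integral_const_mul, integral_max_sub_rpow hab (by linarith),
    Real.mul_rpow (by positivity) (by positivity), Real.mul_rpow (by positivity) (by positivity),
    Real.rpow_rpow_inv hc hp.ne', Real.rpow_rpow_inv (by positivity) hp.ne',
    Real.div_rpow (by positivity) (by positivity), Real.mul_rpow hba h2,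
    Real.rpow_neg (by positivity)]
  ring

theorem BoundedVariationOn.abs_le_abs_integral_div_add {f : ℝ → ℝ} {a b t : ℝ} (hab : a < b)
    (hf : BoundedVariationOn f (Icc a b)) (ht : t ∈ Icc a b) :
    |f t| ≤ |∫ s in a..b, f s| / (b - a) +
      (eVariationOn f (Icc a b)).toReal / (b - a) * max (t - a) (b - t) := by
  have hba : 0 < b - a := sub_pos.2 hab
  have := abs_sub_abs_le_abs_sub ((b - a) * f t) (∫ s in a..b, f s)
  rw [abs_mul, abs_of_pos hba] at this
  rw [div_mul_eq_mul_div, ← add_div, le_div_iff₀ hba]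
  linarith [hf.abs_mul_sub_integral_le ht]

/-- **Theorem 2.** If `f : [a,b] → ℝ` is of bounded variation on `[a,b]` (`a < b`) and `p ≥ 1`,
then `‖f‖_{[a,b],p} ≤ (b-a)^{1/p-1} |∫_a^b f| +
(1/2) (b-a)^{1/p} (2^{p+1}-1)^{1/p} (p+1)^{-1/p} ⋁_a^b (f)`. -/
theorem p_norm_le_integral_mean_add_variation
    (a b : ℝ) (hab : a < b) (p : ℝ) (hp : 1 ≤ p) (f : ℝ → ℝ)
    (hf : BoundedVariationOn f (Icc a b)) :
    (∫ t in a..b, |f t| ^ p) ^ p⁻¹ ≤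
      (b - a) ^ (p⁻¹ - 1) * |∫ t in a..b, f t| +
        (1 / 2) * ((b - a) ^ p⁻¹ * (2 ^ (p + 1) - 1) ^ p⁻¹ * (p + 1) ^ (-p⁻¹)) *
          (eVariationOn f (Icc a b)).toReal := by
  have hba : 0 < b - a := sub_pos.2 hab
  set V := (eVariationOn f (Icc a b)).toReal
  set m := |∫ s in a..b, f s| / (b - a)
  have hV : 0 ≤ V / (b - a) := div_nonneg ENNReal.toReal_nonneg hba.le
  calc (∫ t in a..b, |f t| ^ p) ^ p⁻¹
      ≤ (∫ _ in a..b, m ^ p) ^ p⁻¹ +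
          (∫ t in a..b, (V / (b - a) * max (t - a) (b - t)) ^ p) ^ p⁻¹ := by
        simp only [intervalIntegral.integral_of_le hab.le]
        refine integral_abs_rpow_rpow_inv_le_of_abs_le_add hp aemeasurable_const
          (by fun_prop) (ae_of_all _ fun _ => by positivity)
          (ae_of_all _ fun t => mul_nonneg hV ((half_sub_le_max_sub_sub a b t).trans' ?_))
          (integrable_const _)
          ((Continuous.rpow_const (by fun_prop) fun t => Or.inr (by linarith)).integrableOn_Ioc)
          ((ae_restrict_iff' measurableSet_Ioc).2 (ae_of_all _ fun t ht =>
            hf.abs_le_abs_integral_div_add hab (Ioc_subset_Icc_self ht)))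
        positivity
    _ = _ := by
        rw [integral_mul_max_sub_rpow_rpow_inv hab (by linarith) hV,
          intervalIntegral.integral_const, smul_eq_mul, Real.mul_rpow hba.le (by positivity),
          Real.rpow_rpow_inv (by positivity) (by linarith), Real.rpow_sub hba, Real.rpow_one]
        simp only [m]
        field_simp
end

section
/- The constant 1/2 in the inequality ‖f‖_{[a,b],p} ≤ (b−a)^{1/p − 1}·|∫_a^b f(t) dt| + (1/2)·(b−a)^{1/p}·(2^{p+1} − 1)^{1/p}·(p+1)^{−1/p}·V_a^b(f) is sharp: if D > 0 is such that for every p ≥ 1, every a < b, and every function f : [a,b] → ℝ of bounded variation one has ‖f‖_{[a,b],p} ≤ (b−a)^{1/p − 1}·|∫_a^b f(t) dt| + D·(b−a)^{1/p}·(2^{p+1} − 1)^{1/p}·(p+1)^{−1/p}·V_a^b(f), then D ≥ 1/2. -/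
open MeasureTheory Set Filter Topology

/-!
Test the inequality on `[0, 1]` with the unit step `f = 𝟙_{[1 - u, ∞)}`, `0 < u < 1`: its
`p`-norm is `u ^ (1/p)`, its integral is `u` and its variation is `1`. As `p → ∞` the constant
`(2 ^ (p + 1) - 1) ^ (1/p) (p + 1) ^ (-1/p)` tends to `2` and `u ^ (1/p)` to `1`, so
`1 ≤ u + 2 D`; letting `u → 0` gives `D ≥ 1/2`.
-/

lemma tendsto_const_rpow_inv_atTop {c : ℝ} (hc : 0 < c) :
    Tendsto (fun p : ℝ => c ^ p⁻¹) atTop (𝓝 1) := by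
  simpa [Function.comp_def] using
    (Real.continuousAt_const_rpow (b := 0) hc.ne').tendsto.comp tendsto_inv_atTop_zero

lemma tendsto_add_one_rpow_neg_inv_atTop :
    Tendsto (fun p : ℝ => (p + 1) ^ (-p⁻¹)) atTop (𝓝 1) := by
  refine ((tendsto_rpow_div_mul_add (-1) 1 (-1) one_ne_zero.symm).comp
    (tendsto_atTop_add_const_right _ 1 tendsto_id)).congr fun p => ?_
  simp [neg_div]

lemma tendsto_two_rpow_add_one_sub_one_rpow_inv_atTop :
    Tendsto (fun p : ℝ => ((2 : ℝ) ^ (p + 1) - 1) ^ p⁻¹) atTop (𝓝 2) := by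
  have hupper : Tendsto (fun p : ℝ => 2 * (2 : ℝ) ^ p⁻¹) atTop (𝓝 2) := by
    simpa using (tendsto_const_rpow_inv_atTop two_pos).const_mul 2
  refine tendsto_of_tendsto_of_tendsto_of_le_of_le' tendsto_const_nhds hupper ?_ ?_ <;>
    filter_upwards [eventually_gt_atTop 0] with p hp
  · have h1 : (1 : ℝ) ≤ 2 ^ p := Real.one_le_rpow one_le_two hp.le
    calc (2 : ℝ) = ((2 : ℝ) ^ p) ^ p⁻¹ := (Real.rpow_rpow_inv zero_le_two hp.ne').symm
      _ ≤ (2 ^ (p + 1) - 1) ^ p⁻¹ := by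
        gcongr
        rw [Real.rpow_add_one two_ne_zero]
        linarith
  · have h1 : (1 : ℝ) ≤ 2 ^ (p + 1) := Real.one_le_rpow one_le_two (by linarith)
    calc ((2 : ℝ) ^ (p + 1) - 1) ^ p⁻¹ ≤ ((2 : ℝ) ^ (p + 1)) ^ p⁻¹ := by
          gcongr; linarith
      _ = 2 * 2 ^ p⁻¹ := by
        rw [← Real.rpow_mul zero_le_two, add_mul, mul_inv_cancel₀ hp.ne', Real.rpow_add two_pos,
          Real.rpow_one, one_mul]

lemma abs_indicator_one_rpow {α : Type*} {s : Set α} {p : ℝ} (hp : p ≠ 0) (t : α) :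
    |s.indicator 1 t| ^ p = s.indicator (1 : α → ℝ) t := by
  by_cases ht : t ∈ s <;> simp [ht, hp]

lemma eVariationOn_indicator_Ici_one {a b x : ℝ} (hax : a < x) (hxb : x ≤ b) :
    eVariationOn ((Ici x).indicator (1 : ℝ → ℝ)) (Icc a b) = 1 := by
  have hmono : Monotone ((Ici x).indicator (1 : ℝ → ℝ)) := by
    intro s t hst
    by_cases hs : x ≤ s
    · simp [hs, hs.trans hst]
    · by_cases ht : x ≤ t <;> simp [hs, ht]
  have := (hmono.monotoneOn (Icc a b)).eVariationOn_eq (left_mem_Icc.2 (hax.le.trans hxb))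
    (right_mem_Icc.2 (hax.le.trans hxb))
  simpa [hxb, not_le.2 hax] using this

lemma integral_indicator_Ici_one {a b x : ℝ} (hax : a < x) (hxb : x ≤ b) :
    ∫ t in a..b, (Ici x).indicator (1 : ℝ → ℝ) t = b - x := by
  have hset : Ici x ∩ Ioc a b = Icc x b := by
    ext t; simp only [mem_inter_iff, mem_Ici, mem_Ioc, mem_Icc]; grind
  rw [intervalIntegral.integral_of_le (hax.le.trans hxb), integral_indicator measurableSet_Ici,
    Measure.restrict_restrict measurableSet_Ici, hset]
  simp [hxb]

theorem sharpness_p_norm_variation_constant_general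
    (D : ℝ)
    (h : ∀ p : ℝ, 1 ≤ p → ∀ a b : ℝ, a < b → ∀ f : ℝ → ℝ,
      BoundedVariationOn f (Icc a b) →
      (∫ t in a..b, |f t| ^ p) ^ p⁻¹ ≤
        (b - a) ^ (p⁻¹ - 1) * |∫ t in a..b, f t| +
          D * ((b - a) ^ p⁻¹ * (2 ^ (p + 1) - 1) ^ p⁻¹ * (p + 1) ^ (-p⁻¹)) *
            (eVariationOn f (Icc a b)).toReal) :
    1 / 2 ≤ D := by
  have hstep : ∀ u ∈ Ioo (0 : ℝ) 1, 1 ≤ u + 2 * D := by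
    rintro u ⟨hu0, hu1⟩
    have hax : (0 : ℝ) < 1 - u := by linarith
    have hxb : 1 - u ≤ 1 := by linarith
    have hV := eVariationOn_indicator_Ici_one hax hxb
    have hint := integral_indicator_Ici_one hax hxb
    rw [sub_sub_cancel] at hint
    have hbound : ∀ᶠ p in atTop,
        u ^ p⁻¹ ≤ u + D * ((2 ^ (p + 1) - 1) ^ p⁻¹ * (p + 1) ^ (-p⁻¹)) := by
      filter_upwards [eventually_ge_atTop 1] with p hp
      have := h p hp 0 1 one_pos ((Ici (1 - u)).indicator 1) (by simp [BoundedVariationOn, hV])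
      simpa [abs_indicator_one_rpow (by linarith : p ≠ 0), hint, hV, abs_of_pos hu0] using this
    refine le_of_tendsto_of_tendsto (tendsto_const_rpow_inv_atTop hu0) ?_ hbound
    simpa [mul_comm] using tendsto_const_nhds.add
      ((tendsto_two_rpow_add_one_sub_one_rpow_inv_atTop.mul
        tendsto_add_one_rpow_neg_inv_atTop).const_mul D)
  have hlim : Tendsto (fun u : ℝ => u + 2 * D) (𝓝[>] 0) (𝓝 (2 * D)) :=
    ((continuous_add_const _).tendsto' 0 _ (zero_add _)).mono_left nhdsWithin_le_nhds
  have := ge_of_tendsto hlim (by filter_upwards [Ioo_mem_nhdsGT one_pos] using hstep)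
  linarith

/-- Sharpness of the constant `1/2` in the inequality
`‖f‖_{[a,b],p} ≤ (b-a)^{1/p-1} |∫_a^b f| +
(1/2) (b-a)^{1/p} (2^{p+1}-1)^{1/p} (p+1)^{-1/p} ⋁_a^b (f)`. -/
theorem sharpness_p_norm_variation_constant
    (D : ℝ) (hD : 0 < D)
    (h : ∀ p : ℝ, 1 ≤ p → ∀ a b : ℝ, a < b → ∀ f : ℝ → ℝ,
      BoundedVariationOn f (Icc a b) →
      (∫ t in a..b, |f t| ^ p) ^ p⁻¹ ≤
        (b - a) ^ (p⁻¹ - 1) * |∫ t in a..b, f t| +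
          D * ((b - a) ^ p⁻¹ * (2 ^ (p + 1) - 1) ^ p⁻¹ * (p + 1) ^ (-p⁻¹)) *
            (eVariationOn f (Icc a b)).toReal) :
    1 / 2 ≤ D :=
  sharpness_p_norm_variation_constant_general D h
end

section
/- Let J be an unbounded subinterval of ℝ and g : J → ℝ a locally absolutely continuous function on J with derivative g′. Assume g ∈ L^∞(J), that g′ is of locally bounded variation on J, and that there exist a constant V_J > 0 and r ∈ (0,1] such that the total variation of g′ on the interval with endpoints a and b is at most V_J·|a − b|^r for all a, b ∈ J. Then g′ ∈ L^∞(J) and ‖g′‖_{J,∞} ≤ (2^{r/(r+1)}·(r+1)/r^{r/(r+1)})·‖g‖_{J,∞}^{r/(r+1)}·V_J^{1/(r+1)}. -/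
/-! Given `x ∈ J` and `h > 0`, unboundedness provides `y ∈ J` with `|y - x| = h`. The mean value
theorem for `t ↦ g t - t g'(x)` on the segment `[x, y] ⊆ J`, together with
`|g' t - g' x| ≤ Var(g', [x, y]) ≤ V h^r`, gives `h |g' x| ≤ |g y - g x| + V h^(r+1)`, hence
`|g' x| ≤ 2‖g‖∞ / h + V h^r`; minimising over `h` yields the constant. Continuity of `g` turns the
essential bound on `g` into a pointwise one, since every neighbourhood of a point of `J` meets `J`
in positive measure. -/

open MeasureTheory Set Filter Topology

lemma nonpos_of_forall_le_mul_rpow {V r A : ℝ} (hr : 0 < r) (hA : ∀ h : ℝ, 0 < h → A ≤ V * h ^ r) :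
    A ≤ 0 := by
  have hlim : Tendsto (fun h : ℝ => V * h ^ r) (𝓝[>] 0) (𝓝 0) := by
    have := ((Real.continuousAt_rpow_const 0 r (Or.inr hr.le)).tendsto.const_mul V).mono_left
      (nhdsWithin_le_nhds (s := Ioi 0))
    simpa [Real.zero_rpow hr.ne'] using this
  exact ge_of_tendsto hlim (eventually_nhdsWithin_of_forall fun h hh => hA h hh)

/-- The value of `h ↦ 2M/h + V h^r` at its minimiser `h = (2M / (rV))^(1/(r+1))`. -/
lemma two_mul_div_add_mul_rpow_eq {M V r : ℝ} (hM : 0 < M) (hV : 0 < V) (hr : 0 < r) :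
    2 * M / (2 * M / (r * V)) ^ (1 / (r + 1)) + V * ((2 * M / (r * V)) ^ (1 / (r + 1))) ^ r =
      2 ^ (r / (r + 1)) * (r + 1) / r ^ (r / (r + 1)) * M ^ (r / (r + 1)) * V ^ (1 / (r + 1)) := by
  set K := 2 * M / (r * V) with hK
  have hK0 : 0 < K := by positivity
  have hpow : (K ^ (1 / (r + 1))) ^ r = K ^ (r / (r + 1)) := by
    rw [← Real.rpow_mul hK0.le]; ring_nf
  have hdiv : 2 * M / K ^ (1 / (r + 1)) = r * V * K ^ (r / (r + 1)) := by
    rw [div_eq_iff (by positivity), mul_assoc, ← Real.rpow_add hK0,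
      show r / (r + 1) + 1 / (r + 1) = 1 by field_simp, Real.rpow_one, hK]
    field_simp
  have hKp : K ^ (r / (r + 1)) = 2 ^ (r / (r + 1)) * M ^ (r / (r + 1)) /
      (r ^ (r / (r + 1)) * V ^ (r / (r + 1))) := by
    rw [hK, Real.div_rpow (by positivity) (by positivity), Real.mul_rpow (by norm_num) hM.le,
      Real.mul_rpow hr.le hV.le]
  have hVpq : V ^ (r / (r + 1)) * V ^ (1 / (r + 1)) = V := by
    rw [← Real.rpow_add hV, show r / (r + 1) + 1 / (r + 1) = 1 by field_simp, Real.rpow_one]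
  have : 0 < V ^ (r / (r + 1)) := by positivity
  have : 0 < r ^ (r / (r + 1)) := by positivity
  rw [hpow, hdiv]
  calc r * V * K ^ (r / (r + 1)) + V * K ^ (r / (r + 1))
      = (r + 1) * K ^ (r / (r + 1)) * V := by ring
    _ = (r + 1) * (2 ^ (r / (r + 1)) * M ^ (r / (r + 1)) / (r ^ (r / (r + 1)) * V ^ (r / (r + 1))))
          * (V ^ (r / (r + 1)) * V ^ (1 / (r + 1))) := by rw [hKp, hVpq]
    _ = _ := by field_simp

lemma le_of_forall_le_two_mul_div_add_mul_rpow {M V r A : ℝ} (hM : 0 ≤ M) (hV : 0 < V)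
    (hr : 0 < r) (hA : ∀ h : ℝ, 0 < h → A ≤ 2 * M / h + V * h ^ r) :
    A ≤ 2 ^ (r / (r + 1)) * (r + 1) / r ^ (r / (r + 1)) * M ^ (r / (r + 1)) *
      V ^ (1 / (r + 1)) := by
  rcases hM.eq_or_lt with rfl | hM
  · rw [Real.zero_rpow (by positivity), mul_zero, zero_mul]
    exact nonpos_of_forall_le_mul_rpow hr fun h hh => by simpa using hA h hh
  · rw [← two_mul_div_add_mul_rpow_eq hM hV hr]
    exact hA _ (by positivity)

namespace Set.OrdConnected

lemma exists_mem_abs_sub_eq {J : Set ℝ} (hJ : J.OrdConnected) (hJu : ¬ Bornology.IsBounded J)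
    {x h : ℝ} (hx : x ∈ J) (hh : 0 ≤ h) : ∃ y ∈ J, |y - x| = h := by
  rw [isBounded_iff_bddBelow_bddAbove, not_and_or] at hJu
  rcases hJu with hb | ha
  · obtain ⟨z, hz, hzx⟩ := not_bddBelow_iff.1 hb (x - h)
    exact ⟨x - h, hJ.out hz hx ⟨hzx.le, by linarith⟩, by simp [abs_of_nonneg hh]⟩
  · obtain ⟨z, hz, hxz⟩ := not_bddAbove_iff.1 ha (x + h)
    exact ⟨x + h, hJ.out hx hz ⟨by linarith, hxz.le⟩, by simp [abs_of_nonneg hh]⟩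

lemma volume_inter_ne_zero {J : Set ℝ} (hJ : J.OrdConnected) (hJu : ¬ Bornology.IsBounded J)
    {x : ℝ} (hx : x ∈ J) {U : Set ℝ} (hU : U ∈ 𝓝 x) :
    volume (J ∩ U) ≠ 0 := by
  obtain ⟨δ, hδ, hδU⟩ := Metric.mem_nhds_iff.1 hU
  obtain ⟨y, hy, hyx⟩ := hJ.exists_mem_abs_sub_eq hJu hx (half_pos hδ).le
  have hball : uIcc x y ⊆ Metric.ball x δ := fun z hz => by
    rw [Metric.mem_ball, Real.dist_eq]
    linarith [abs_sub_left_of_mem_uIcc hz]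
  refine (measure_mono (subset_inter (hJ.uIcc_subset hx hy) (hball.trans hδU))).trans_lt' ?_ |>.ne'
  rw [Real.volume_interval, hyx]
  exact ENNReal.ofReal_pos.2 (half_pos hδ)

end Set.OrdConnected

lemma norm_le_of_ae_restrict_le {α E : Type*} [TopologicalSpace α] [MeasurableSpace α]
    [SeminormedAddGroup E] {μ : Measure α} {s : Set α} {f : α → E} {x : α} {C : ℝ}
    (hx : ∀ U ∈ 𝓝 x, μ (s ∩ U) ≠ 0) (hf : ContinuousWithinAt f s x)
    (hC : ∀ᵐ y ∂μ.restrict s, ‖f y‖ ≤ C) : ‖f x‖ ≤ C := by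
  by_contra! hlt
  obtain ⟨U, hU, hUs⟩ :=
    mem_nhdsWithin_iff_exists_mem_nhds_inter.1 (hf.norm.eventually_const_lt hlt)
  refine hx U hU (measure_mono_null (t := {y | ¬ ‖f y‖ ≤ C} ∩ s) ?_ ?_)
  · rintro y ⟨hys, hyU⟩
    exact ⟨not_le.2 (hUs ⟨hyU, hys⟩), hys⟩
  · exact nonpos_iff_eq_zero.1 ((Measure.le_restrict_apply _ _).trans (ae_iff.1 hC).le)

lemma dist_le_of_eVariationOn_le {α E : Type*} [LinearOrder α] [PseudoMetricSpace E] {f : α → E}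
    {s : Set α} {C : ℝ} {a b : α} (hC : 0 ≤ C) (h : eVariationOn f s ≤ ENNReal.ofReal C)
    (ha : a ∈ s) (hb : b ∈ s) : dist (f a) (f b) ≤ C :=
  (edist_le_ofReal hC).1 ((eVariationOn.edist_le f ha hb).trans h)

lemma holderOnWith_of_eVariationOn_le {E : Type*} [PseudoMetricSpace E] {f : ℝ → E} {J : Set ℝ}
    {V r : ℝ} (hr : 0 ≤ r)
    (hvar : ∀ a ∈ J, ∀ b ∈ J, eVariationOn f (uIcc a b) ≤ ENNReal.ofReal (V * |a - b| ^ r)) :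
    HolderOnWith V.toNNReal r.toNNReal f J := fun a ha b hb => by
  refine (eVariationOn.edist_le f left_mem_uIcc right_mem_uIcc).trans ((hvar a ha b hb).trans_eq ?_)
  rw [ENNReal.ofReal_mul' (by positivity), edist_dist, Real.dist_eq,
    Real.coe_toNNReal _ hr, ENNReal.ofReal_rpow_of_nonneg (abs_nonneg _) hr]
  rfl

lemma norm_smul_deriv_le {E : Type*} [NormedAddCommGroup E] [NormedSpace ℝ E] {g g' : ℝ → E}
    {x y C : ℝ} (hderiv : ∀ t ∈ uIcc x y, HasDerivWithinAt g (g' t) (uIcc x y) t)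
    (hC : ∀ t ∈ uIcc x y, ‖g' t - g' x‖ ≤ C) :
    |y - x| * ‖g' x‖ ≤ ‖g y - g x‖ + C * |y - x| := by
  have hlin : ∀ t ∈ uIcc x y,
      HasDerivWithinAt (fun t => g t - t • g' x) (g' t - g' x) (uIcc x y) t := fun t ht =>
    ((hderiv t ht).sub ((hasDerivWithinAt_id t _).smul_const (g' x))).congr_deriv (by rw [one_smul])
  have hmvt := (convex_uIcc x y).norm_image_sub_le_of_norm_hasDerivWithin_le hlin hC
    left_mem_uIcc right_mem_uIcc
  rw [Real.norm_eq_abs] at hmvt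
  calc |y - x| * ‖g' x‖ = ‖(g y - g x) - ((g y - y • g' x) - (g x - x • g' x))‖ := by
        rw [← Real.norm_eq_abs, ← norm_smul, sub_smul]; congr 1; abel
    _ ≤ ‖g y - g x‖ + C * |y - x| := (norm_sub_le _ _).trans (by gcongr)

lemma Set.OrdConnected.norm_deriv_le_of_eVariationOn_le {E : Type*} [NormedAddCommGroup E]
    [NormedSpace ℝ E] {J : Set ℝ} (hJ : J.OrdConnected) (hJu : ¬ Bornology.IsBounded J)
    {g g' : ℝ → E} (hderiv : ∀ x ∈ J, HasDerivWithinAt g (g' x) J x) {M V r : ℝ}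
    (hgM : ∀ x ∈ J, ‖g x‖ ≤ M) (hV : 0 ≤ V)
    (hvar : ∀ a ∈ J, ∀ b ∈ J, eVariationOn g' (uIcc a b) ≤ ENNReal.ofReal (V * |a - b| ^ r))
    {x h : ℝ} (hx : x ∈ J) (hh : 0 < h) : ‖g' x‖ ≤ 2 * M / h + V * h ^ r := by
  obtain ⟨y, hy, hyx⟩ := hJ.exists_mem_abs_sub_eq hJu hx hh.le
  have hsub := hJ.uIcc_subset hx hy
  have hC : ∀ t ∈ uIcc x y, ‖g' t - g' x‖ ≤ V * h ^ r := fun t ht => by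
    rw [← dist_eq_norm, ← hyx, abs_sub_comm]
    exact dist_le_of_eVariationOn_le (by positivity) (hvar x hx y hy) ht left_mem_uIcc
  have hmvt := norm_smul_deriv_le (fun t ht => (hderiv t (hsub ht)).mono hsub) hC
  have hgyx : ‖g y - g x‖ ≤ 2 * M := (norm_sub_le _ _).trans (by linarith [hgM y hy, hgM x hx])
  rw [hyx] at hmvt
  rw [div_add' _ _ _ hh.ne', le_div_iff₀ hh]
  linarith

lemma memLp_top_and_toReal_eLpNorm_le {α E : Type*} [MeasurableSpace α] [NormedAddCommGroup E]
    {μ : Measure α} {f : α → E} {C : ℝ} (hf : AEStronglyMeasurable f μ) (hC0 : 0 ≤ C)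
    (hC : ∀ᵐ x ∂μ, ‖f x‖ ≤ C) : MemLp f ⊤ μ ∧ (eLpNorm f ⊤ μ).toReal ≤ C := by
  refine ⟨memLp_top_of_bound hf C hC, ?_⟩
  rw [eLpNorm_exponent_top]
  exact ENNReal.toReal_le_of_le_ofReal hC0 (eLpNormEssSup_le_of_ae_bound hC)

theorem landau_sup_norm_of_variation_bound_general
    (J : Set ℝ) (hJ : J.OrdConnected) (hJu : ¬ Bornology.IsBounded J)
    (g g' : ℝ → ℝ) (hderiv : ∀ x ∈ J, HasDerivWithinAt g (g' x) J x)
    (hg : MemLp g ⊤ (volume.restrict J))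
    (V r : ℝ) (hV : 0 < V) (hr : r ∈ Ioc (0 : ℝ) 1)
    (hvar : ∀ a ∈ J, ∀ b ∈ J,
      eVariationOn g' (uIcc a b) ≤ ENNReal.ofReal (V * |a - b| ^ r)) :
    MemLp g' ⊤ (volume.restrict J) ∧
      (eLpNorm g' ⊤ (volume.restrict J)).toReal ≤
        2 ^ (r / (r + 1)) * (r + 1) / r ^ (r / (r + 1)) *
          (eLpNorm g ⊤ (volume.restrict J)).toReal ^ (r / (r + 1)) *
            V ^ (1 / (r + 1)) := by
  obtain ⟨hr0, -⟩ := hr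
  have hJm : MeasurableSet J := hJ.measurableSet
  set M := (eLpNorm g ⊤ (volume.restrict J)).toReal
  have hgM : ∀ x ∈ J, ‖g x‖ ≤ M := fun x hx =>
    norm_le_of_ae_restrict_le (fun _ hU => hJ.volume_inter_ne_zero hJu hx hU)
      (hderiv x hx).continuousWithinAt
      (by simpa only [M, toReal_eLpNorm hg.1] using ae_le_lpNorm_exponent_top hg)
  have hg'B : ∀ x ∈ J, ‖g' x‖ ≤ 2 ^ (r / (r + 1)) * (r + 1) / r ^ (r / (r + 1)) *
      M ^ (r / (r + 1)) * V ^ (1 / (r + 1)) := fun x hx =>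
    le_of_forall_le_two_mul_div_add_mul_rpow ENNReal.toReal_nonneg hV hr0 fun _ hh =>
      hJ.norm_deriv_le_of_eVariationOn_le hJu hderiv hgM hV.le hvar hx hh
  have hg'cont : ContinuousOn g' J :=
    (holderOnWith_of_eVariationOn_le hr0.le hvar).continuousOn (by simpa using hr0)
  exact memLp_top_and_toReal_eLpNorm_le (hg'cont.aestronglyMeasurable hJm) (by positivity)
    (ae_restrict_of_forall_mem hJm hg'B)

/-- **Theorem 3.** Let `J` be an unbounded interval of `ℝ` and `g : J → ℝ` locally absolutely
continuous with derivative `g'`. If `g ∈ L^∞(J)`, `g'` is of locally bounded variation and its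
variation on any subinterval with endpoints `a, b ∈ J` is `≤ V |a-b|^r` with `V > 0`,
`r ∈ (0,1]`, then `g' ∈ L^∞(J)` and
`‖g'‖_{J,∞} ≤ (2^{r/(r+1)} (r+1)/r^{r/(r+1)}) ‖g‖_{J,∞}^{r/(r+1)} V^{1/(r+1)}`. -/
theorem landau_sup_norm_of_variation_bound
    (J : Set ℝ) (hJ : J.OrdConnected) (hJu : ¬ Bornology.IsBounded J)
    (g g' : ℝ → ℝ) (hderiv : ∀ x ∈ J, HasDerivWithinAt g (g' x) J x)
    (hg : MemLp g ⊤ (volume.restrict J))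
    (hbv : ∀ a ∈ J, ∀ b ∈ J, BoundedVariationOn g' (uIcc a b))
    (V r : ℝ) (hV : 0 < V) (hr : r ∈ Ioc (0 : ℝ) 1)
    (hvar : ∀ a ∈ J, ∀ b ∈ J,
      eVariationOn g' (uIcc a b) ≤ ENNReal.ofReal (V * |a - b| ^ r)) :
    MemLp g' ⊤ (volume.restrict J) ∧
      (eLpNorm g' ⊤ (volume.restrict J)).toReal ≤
        2 ^ (r / (r + 1)) * (r + 1) / r ^ (r / (r + 1)) *
          (eLpNorm g ⊤ (volume.restrict J)).toReal ^ (r / (r + 1)) *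
            V ^ (1 / (r + 1)) :=
  landau_sup_norm_of_variation_bound_general J hJ hJu g g' hderiv hg V r hV hr hvar
end

section
/- Let J be an unbounded subinterval of ℝ and g : J → ℝ a locally absolutely continuous function on J with derivative g′. Assume g ∈ L^∞(J) and that there exist V_J > 0 and r ∈ (0,1] such that the total variation of g′ on the interval with endpoints a and b is at most V_J·|b − a|^r for all a, b ∈ J. Then for every b ∈ J and every λ > 0 one has |g′(b)| ≤ 2‖g‖_{J,∞}/λ + V_J·λ^r (using that, since J is unbounded, for every b ∈ J and λ > 0 there exists a ∈ J with |b − a| = λ). -/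
/-!
Pick `a ∈ J` at distance `λ` from `b`. By the mean value theorem `g'` takes the value
`(g b - g a) / (b - a)`, of modulus at most `2‖g‖_∞ / λ`, at some `c` between `a` and `b`, and
`|g' b - g' c|` is bounded by the variation of `g'` on `[a, b]`, hence by `V λ ^ r`. The
essential bound on `g` holds at every point of `J` because `g` is continuous on `J` and `J`
lies in the closure of its interior.
-/

open MeasureTheory Set

lemma Set.OrdConnected.exists_mem_abs_sub_eq_s8 {J : Set ℝ} (hJ : J.OrdConnected)
    (hJu : ¬ Bornology.IsBounded J) {b : ℝ} (hb : b ∈ J) {l : ℝ} (hl : 0 ≤ l) :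
    ∃ a ∈ J, |b - a| = l := by
  rw [isBounded_iff_bddBelow_bddAbove, not_and_or, not_bddBelow_iff, not_bddAbove_iff] at hJu
  rcases hJu with hbelow | habove
  · obtain ⟨y, hy, hyl⟩ := hbelow (b - l)
    exact ⟨b - l, hJ.out hy hb ⟨hyl.le, by linarith⟩, by simp [abs_of_nonneg hl]⟩
  · obtain ⟨y, hy, hyl⟩ := habove (b + l)
    exact ⟨b + l, hJ.out hb hy ⟨by linarith, hyl.le⟩, by simp [abs_of_nonneg hl]⟩

lemma Set.OrdConnected.subset_closure_interior {J : Set ℝ} (hJ : J.OrdConnected)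
    (hJn : J.Nontrivial) : J ⊆ closure (interior J) := by
  obtain ⟨a, ha, b, hb, hab⟩ := hJn
  have hinterior : (interior J).Nonempty := by
    rcases hab.lt_or_gt with hab | hba
    · exact (nonempty_Ioo.2 hab).mono (interior_Icc (a := a) ▸ interior_mono (hJ.out ha hb))
    · exact (nonempty_Ioo.2 hba).mono (interior_Icc (a := b) ▸ interior_mono (hJ.out hb ha))
  rw [(hJ.convex (𝕜 := ℝ)).closure_interior_eq_closure_of_nonempty_interior hinterior]
  exact subset_closure

lemma forall_le_of_ae_restrict_le {X Y : Type*} [TopologicalSpace X] [MeasurableSpace X]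
    [LinearOrder Y] [TopologicalSpace Y] [OrderClosedTopology Y] {μ : Measure X}
    [μ.IsOpenPosMeasure] {s : Set X} (hs : s ⊆ closure (interior s)) {f : X → Y}
    (hf : ContinuousOn f s) {C : Y} (hle : ∀ᵐ x ∂μ.restrict s, f x ≤ C) :
    ∀ x ∈ s, f x ≤ C := by
  have hmax : EqOn (fun x ↦ max (f x) C) (fun _ ↦ C) s :=
    Measure.eqOn_of_ae_eq (hle.mono fun x hx ↦ max_eq_right hx) (hf.sup continuousOn_const)
      continuousOn_const hs
  exact fun x hx ↦ max_eq_right_iff.1 (hmax hx)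

lemma abs_le_abs_slope_add_of_eVariationOn_le {g g' : ℝ → ℝ} {a b W : ℝ} (hab : a ≠ b)
    (hderiv : ∀ x ∈ uIcc a b, HasDerivWithinAt g (g' x) (uIcc a b) x)
    (hvar : eVariationOn g' (uIcc a b) ≤ ENNReal.ofReal W) (hW : 0 ≤ W) {x : ℝ}
    (hx : x ∈ uIcc a b) : |g' x| ≤ |g b - g a| / |b - a| + W := by
  wlog hlt : a < b generalizing a b
  · have := this hab.symm (uIcc_comm a b ▸ hderiv) (uIcc_comm a b ▸ hvar) (uIcc_comm a b ▸ hx)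
      (hab.lt_or_gt.resolve_left hlt)
    rwa [abs_sub_comm (g a), abs_sub_comm a] at this
  rw [uIcc_of_lt hlt] at hderiv hvar hx
  obtain ⟨c, hc, hslope⟩ := exists_hasDerivAt_eq_slope g g' hlt
    (fun y hy ↦ (hderiv y hy).continuousWithinAt)
    (fun y hy ↦ (hderiv y (Ioo_subset_Icc_self hy)).hasDerivAt (Icc_mem_nhds hy.1 hy.2))
  have hosc : |g' x - g' c| ≤ W := by
    rw [← Real.dist_eq, ← edist_le_ofReal hW]
    exact (eVariationOn.edist_le g' hx (Ioo_subset_Icc_self hc)).trans hvar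
  have hslope_abs : |g' c| = |g b - g a| / |b - a| := by rw [hslope, abs_div]
  linarith [abs_sub_abs_le_abs_sub (g' x) (g' c)]

theorem landau_pointwise_estimate_general
    (J : Set ℝ) (hJ : J.OrdConnected) (hJu : ¬ Bornology.IsBounded J)
    (g g' : ℝ → ℝ) (hderiv : ∀ x ∈ J, HasDerivWithinAt g (g' x) J x)
    (hg : MemLp g ⊤ (volume.restrict J))
    (V r : ℝ) (hV : 0 < V)
    (hvar : ∀ a ∈ J, ∀ b ∈ J,
      eVariationOn g' (uIcc a b) ≤ ENNReal.ofReal (V * |b - a| ^ r)) :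
    ∀ b ∈ J, ∀ l : ℝ, 0 < l →
      |g' b| ≤ 2 * (eLpNorm g ⊤ (volume.restrict J)).toReal / l + V * l ^ r := by
  intro b hb l hl
  obtain ⟨a, ha, hab⟩ := hJ.exists_mem_abs_sub_eq_s8 hJu hb hl.le
  have hne : a ≠ b := by rintro rfl; simp [hl.ne] at hab
  set C := (eLpNorm g ⊤ (volume.restrict J)).toReal
  have hbound : ∀ x ∈ J, |g x| ≤ C := by
    refine forall_le_of_ae_restrict_le (μ := volume) (hJ.subset_closure_interior ⟨a, ha, b, hb, hne⟩)
      (fun x hx ↦ (hderiv x hx).continuousWithinAt.abs) ?_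
    simpa only [C, toReal_eLpNorm hg.aestronglyMeasurable, Real.norm_eq_abs]
      using ae_le_lpNorm_exponent_top hg
  have hsub : uIcc a b ⊆ J := hJ.uIcc_subset ha hb
  calc |g' b| ≤ |g b - g a| / |b - a| + V * l ^ r :=
        abs_le_abs_slope_add_of_eVariationOn_le hne (fun x hx ↦ (hderiv x (hsub hx)).mono hsub)
          (hab ▸ hvar a ha b hb) (by positivity) right_mem_uIcc
    _ ≤ 2 * C / l + V * l ^ r := by
        rw [hab, two_mul]
        gcongr
        exact (abs_sub _ _).trans (add_le_add (hbound b hb) (hbound a ha))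

/-- The key pointwise estimate: under the hypotheses of Theorem 3, for every `b ∈ J` and
`λ > 0` one has `|g'(b)| ≤ 2‖g‖_{J,∞}/λ + V λ^r`. -/
theorem landau_pointwise_estimate
    (J : Set ℝ) (hJ : J.OrdConnected) (hJu : ¬ Bornology.IsBounded J)
    (g g' : ℝ → ℝ) (hderiv : ∀ x ∈ J, HasDerivWithinAt g (g' x) J x)
    (hg : MemLp g ⊤ (volume.restrict J))
    (V r : ℝ) (hV : 0 < V) (hr : r ∈ Ioc (0 : ℝ) 1)
    (hvar : ∀ a ∈ J, ∀ b ∈ J,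
      eVariationOn g' (uIcc a b) ≤ ENNReal.ofReal (V * |b - a| ^ r)) :
    ∀ b ∈ J, ∀ l : ℝ, 0 < l →
      |g' b| ≤ 2 * (eLpNorm g ⊤ (volume.restrict J)).toReal / l + V * l ^ r :=
  landau_pointwise_estimate_general J hJ hJu g g' hderiv hg V r hV hvar
end

section
/- Let J be an unbounded subinterval of ℝ and g : J → ℝ such that g′ exists and is locally absolutely continuous on J, with second derivative g″ ∈ L^p(J) for some p > 1. If g ∈ L^∞(J), then g′ ∈ L^∞(J) and ‖g′‖_{J,∞} ≤ (2^{(p−1)/(2p−1)}·(2p−1)/((p−1)^{(p−1)/(2p−1)}·p^{p/(2p−1)}))·‖g‖_{J,∞}^{(p−1)/(2p−1)}·‖g″‖_{J,p}^{p/(2p−1)}. (This follows from the bound ‖g′‖_{J,∞} ≤ (2^{r/(r+1)}(r+1)/r^{r/(r+1)})‖g‖_{J,∞}^{r/(r+1)}V_J^{1/(r+1)} applied with r = (p−1)/p and V_J = ‖g″‖_{J,p}.) -/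
/-!
The mean value theorem on an interval `[u, u + h] ⊆ J` gives a point where
`|g'| ≤ 2 ‖g‖_∞ / h`, and by Hölder's inequality `g'` oscillates on that interval by at most
`∫_u^{u+h} |g''| ≤ ‖g''‖_p h^{1 - 1/p}`. As `J` is unbounded, every point of `J` lies in such an
interval for every `h > 0`, so `‖g'‖_∞ ≤ 2 ‖g‖_∞ / h + ‖g''‖_p h^{1 - 1/p}`; minimising over `h`
gives the constant. The boundary of the interval `J` is null, so one can work on its interior,
where `g` is differentiable and bounded by `‖g‖_∞` everywhere, not just almost everywhere.
-/

open MeasureTheory Set Filter Topology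
open scoped ENNReal Interval

theorem Set.OrdConnected.exists_Icc_subset {s : Set ℝ} (hs : s.OrdConnected)
    (hsb : ¬Bornology.IsBounded s) {x h : ℝ} (hx : x ∈ s) (hh : 0 ≤ h) :
    ∃ u, x ∈ Icc u (u + h) ∧ Icc u (u + h) ⊆ s := by
  rw [isBounded_iff_bddBelow_bddAbove, not_and_or] at hsb
  rcases hsb with hsb | hsb
  · obtain ⟨w, hw, hwx⟩ := not_bddBelow_iff.mp hsb (x - h)
    refine ⟨x - h, ⟨by linarith, by linarith⟩, (Icc_subset_Icc hwx.le (by linarith)).trans ?_⟩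
    exact hs.out hw hx
  · obtain ⟨w, hw, hwx⟩ := not_bddAbove_iff.mp hsb (x + h)
    exact ⟨x, ⟨le_rfl, by linarith⟩, (Icc_subset_Icc le_rfl hwx.le).trans (hs.out hx hw)⟩

theorem Set.OrdConnected.not_isBounded_interior {s : Set ℝ} (hs : s.OrdConnected)
    (hsb : ¬Bornology.IsBounded s) : ¬Bornology.IsBounded (interior s) := by
  obtain ⟨x, hx⟩ : s.Nonempty := nonempty_iff_ne_empty.mpr (by rintro rfl; simp at hsb)
  rw [isBounded_iff_bddBelow_bddAbove, not_and_or] at hsb ⊢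
  refine hsb.imp (fun hsb hb => ?_) (fun hsb hb => ?_)
  · refine not_bddBelow_Iio x (hb.mono (interior_maximal (fun y hy => ?_) isOpen_Iio))
    obtain ⟨w, hw, hwy⟩ := not_bddBelow_iff.mp hsb y
    exact hs.out hw hx ⟨hwy.le, le_of_lt hy⟩
  · refine not_bddAbove_Ioi x (hb.mono (interior_maximal (fun y hy => ?_) isOpen_Ioi))
    obtain ⟨w, hw, hwy⟩ := not_bddAbove_iff.mp hsb y
    exact hs.out hx hw ⟨le_of_lt hy, hwy.le⟩

theorem MeasureTheory.MemLp.ae_norm_le_toReal_eLpNorm_top {α E : Type*} [MeasurableSpace α]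
    [NormedAddCommGroup E] {μ : Measure α} {f : α → E} (hf : MemLp f ∞ μ) :
    ∀ᵐ x ∂μ, ‖f x‖ ≤ (eLpNorm f ∞ μ).toReal := by
  filter_upwards [ae_le_eLpNormEssSup (f := f) (μ := μ)] with x hx
  rw [eLpNorm_exponent_top, ← toReal_enorm]
  exact ENNReal.toReal_mono (eLpNorm_exponent_top (f := f) ▸ hf.2.ne) hx

theorem ContinuousOn.norm_le_of_ae_restrict_norm_le {X E : Type*} [TopologicalSpace X]
    [MeasurableSpace X] {μ : Measure X} [μ.IsOpenPosMeasure] [NormedAddCommGroup E]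
    {f : X → E} {U : Set X} {C : ℝ} (hf : ContinuousOn f U) (hU : IsOpen U)
    (h : ∀ᵐ x ∂μ.restrict U, ‖f x‖ ≤ C) : ∀ x ∈ U, ‖f x‖ ≤ C := by
  have hmin : (fun x => min ‖f x‖ C) =ᵐ[μ.restrict U] fun x => ‖f x‖ := by
    filter_upwards [h] with x hx using min_eq_left hx
  intro x hx
  calc ‖f x‖ = min ‖f x‖ C :=
        (Measure.eqOn_open_of_ae_eq hmin hU (hf.norm.inf continuousOn_const) hf.norm hx).symm
    _ ≤ C := min_le_right _ _

theorem setIntegral_norm_le_eLpNorm_mul_measureReal_rpow {α E : Type*} [MeasurableSpace α]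
    [NormedAddCommGroup E] {μ : Measure α} {s : Set α} {f : α → E} {p : ℝ} (hp : 1 ≤ p)
    (hf : MemLp f (ENNReal.ofReal p) (μ.restrict s)) (hs : μ s ≠ ∞) :
    ∫ x in s, ‖f x‖ ∂μ ≤ (eLpNorm f (ENNReal.ofReal p) (μ.restrict s)).toReal *
      μ.real s ^ (1 - p⁻¹) := by
  have hholder := eLpNorm_le_eLpNorm_mul_rpow_measure_univ (ENNReal.one_le_ofReal.mpr hp) hf.1
  rw [Measure.restrict_apply_univ, ENNReal.toReal_one, ENNReal.toReal_ofReal (by linarith),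
    div_one, one_div] at hholder
  rw [integral_norm_eq_lintegral_enorm hf.1, ← eLpNorm_one_eq_lintegral_enorm, measureReal_def,
    ENNReal.toReal_rpow, ← ENNReal.toReal_mul]
  have hexp : 0 ≤ 1 - p⁻¹ := sub_nonneg.mpr (inv_le_one_of_one_le₀ hp)
  exact ENNReal.toReal_mono (ENNReal.mul_ne_top hf.2.ne (ENNReal.rpow_ne_top_of_nonneg hexp hs))
    hholder

theorem abs_sub_le_eLpNorm_mul_rpow_of_eq_intervalIntegral {J : Set ℝ} {F f : ℝ → ℝ} {p : ℝ}
    (hp : 1 ≤ p) (hF : ∀ a ∈ J, ∀ b ∈ J, F b - F a = ∫ t in a..b, f t)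
    (hf : MemLp f (ENNReal.ofReal p) (volume.restrict J)) {u v : ℝ} (huv : u ≤ v)
    (hJ : Icc u v ⊆ J) {x y : ℝ} (hx : x ∈ Icc u v) (hy : y ∈ Icc u v) :
    |F y - F x| ≤
      (eLpNorm f (ENNReal.ofReal p) (volume.restrict J)).toReal * (v - u) ^ (1 - p⁻¹) := by
  have hIoc : volume.restrict (Ioc u v) ≤ volume.restrict J :=
    Measure.restrict_mono (Ioc_subset_Icc_self.trans hJ) le_rfl
  have hfI : MemLp f (ENNReal.ofReal p) (volume.restrict (Ioc u v)) := hf.mono_measure hIoc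
  have hint : IntegrableOn f (Ioc u v) := hfI.integrable (ENNReal.one_le_ofReal.mpr hp)
  have hxy : Ι x y ⊆ Ioc u v := fun t ht =>
    ⟨(le_min hx.1 hy.1).trans_lt ht.1, ht.2.trans (max_le hx.2 hy.2)⟩
  rw [hF x (hJ hx) y (hJ hy), ← Real.norm_eq_abs]
  calc ‖∫ t in x..y, f t‖ ≤ ∫ t in Ι x y, ‖f t‖ :=
        intervalIntegral.norm_integral_le_integral_norm_uIoc
    _ ≤ ∫ t in Ioc u v, ‖f t‖ :=
      setIntegral_mono_set hint.norm (Eventually.of_forall fun _ => norm_nonneg _) hxy.eventuallyLE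
    _ ≤ (eLpNorm f (ENNReal.ofReal p) (volume.restrict (Ioc u v))).toReal *
          volume.real (Ioc u v) ^ (1 - p⁻¹) :=
      setIntegral_norm_le_eLpNorm_mul_measureReal_rpow hp hfI measure_Ioc_lt_top.ne
    _ ≤ _ := by
      rw [Real.volume_real_Ioc_of_le huv]
      exact mul_le_mul_of_nonneg_right
        (ENNReal.toReal_mono hf.2.ne (eLpNorm_mono_measure _ hIoc))
        (Real.rpow_nonneg (sub_nonneg.mpr huv) _)

theorem abs_le_of_hasDerivAt_of_abs_sub_le {f f' : ℝ → ℝ} {u v D : ℝ} (huv : u < v)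
    (hfc : ContinuousOn f (Icc u v)) (hf : ∀ x ∈ Ioo u v, HasDerivAt f (f' x) x)
    (hD : ∀ x ∈ Icc u v, ∀ y ∈ Icc u v, |f' y - f' x| ≤ D) {x : ℝ} (hx : x ∈ Icc u v) :
    |f' x| ≤ |f v - f u| / (v - u) + D := by
  obtain ⟨c, hc, hslope⟩ := exists_hasDerivAt_eq_slope f f' huv hfc hf
  calc |f' x| = |f' c + (f' x - f' c)| := by rw [add_sub_cancel]
    _ ≤ |f' c| + |f' x - f' c| := abs_add_le _ _
    _ ≤ |f' c| + D := by gcongr; exact hD c (Ioo_subset_Icc_self hc) x hx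
    _ = |f v - f u| / (v - u) + D := by rw [hslope, abs_div, abs_of_pos (sub_pos.mpr huv)]

theorem abs_le_two_mul_div_add_mul_rpow {s : Set ℝ} (hs : s.OrdConnected)
    (hsb : ¬Bornology.IsBounded s) {f f' : ℝ → ℝ} (hf : ∀ x ∈ s, HasDerivAt f (f' x) x)
    {M V r : ℝ} (hM : ∀ x ∈ s, |f x| ≤ M)
    (hV : ∀ u v, u ≤ v → Icc u v ⊆ s → ∀ x ∈ Icc u v, ∀ y ∈ Icc u v,
      |f' y - f' x| ≤ V * (v - u) ^ r)
    {x h : ℝ} (hx : x ∈ s) (hh : 0 < h) : |f' x| ≤ 2 * M / h + V * h ^ r := by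
  obtain ⟨u, hxu, hsub⟩ := hs.exists_Icc_subset hsb hx hh.le
  have huh : u ≤ u + h := by linarith
  have key := abs_le_of_hasDerivAt_of_abs_sub_le (lt_add_of_pos_right u hh)
    (fun y hy => (hf y (hsub hy)).continuousAt.continuousWithinAt)
    (fun y hy => hf y (hsub (Ioo_subset_Icc_self hy))) (hV u (u + h) huh hsub) hxu
  rw [add_sub_cancel_left] at key
  refine key.trans ?_
  gcongr
  linarith [abs_sub (f (u + h)) (f u), hM _ (hsub (left_mem_Icc.mpr huh)),
    hM _ (hsub (right_mem_Icc.mpr huh))]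

theorem le_of_forall_le_div_add_mul_rpow {A B N r : ℝ} (hA : 0 ≤ A) (hB : 0 ≤ B) (hr : 0 < r)
    (h : ∀ t, 0 < t → N ≤ A / t + B * t ^ r) :
    N ≤ (r + 1) * (A / r) ^ (r / (r + 1)) * B ^ (1 / (r + 1)) := by
  rcases hA.eq_or_lt with rfl | hA
  · have hlim : Tendsto (fun t : ℝ => 0 / t + B * t ^ r) (𝓝[>] 0) (𝓝 0) := by
      have := ((Real.continuous_rpow_const hr.le).tendsto 0).const_mul B
      simpa [Real.zero_rpow hr.ne'] using this.mono_left nhdsWithin_le_nhds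
    rw [zero_div, Real.zero_rpow (by positivity), mul_zero, zero_mul]
    refine ge_of_tendsto hlim ?_
    filter_upwards [self_mem_nhdsWithin] with t ht using h t ht
  rcases hB.eq_or_lt with rfl | hB
  · have hlim : Tendsto (fun t : ℝ => A / t + 0 * t ^ r) atTop (𝓝 0) := by
      simpa using tendsto_const_nhds.div_atTop tendsto_id
    rw [Real.zero_rpow (by positivity), mul_zero]
    refine ge_of_tendsto hlim ?_
    filter_upwards [eventually_gt_atTop 0] with t ht using h t ht
  -- the infimum over `t` is attained at `t = c ^ (1 / (r + 1))`, where `t ^ (r + 1) = c`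
  set c := A / (r * B) with hc_def
  have hc : 0 < c := by positivity
  have ha : r / (r + 1) = 1 - 1 / (r + 1) := by field_simp; ring
  have hct : (c ^ (1 / (r + 1))) ^ r = c ^ (r / (r + 1)) := by
    rw [← Real.rpow_mul hc.le]; ring_nf
  have hAt : A / c ^ (1 / (r + 1)) = r * B * c ^ (r / (r + 1)) := by
    rw [ha, Real.rpow_sub hc, Real.rpow_one, hc_def]; field_simp
  calc N ≤ A / c ^ (1 / (r + 1)) + B * (c ^ (1 / (r + 1))) ^ r := h _ (by positivity)
    _ = (r + 1) * B * c ^ (r / (r + 1)) := by rw [hct, hAt]; ring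
    _ = (r + 1) * (A / r) ^ (r / (r + 1)) * B ^ (1 / (r + 1)) := by
      rw [hc_def, ← div_div, Real.div_rpow (by positivity) hB.le, mul_assoc, mul_assoc,
        mul_div_assoc', ha, Real.rpow_sub hB, Real.rpow_one]
      field_simp

theorem landau_constant_eq {p M V : ℝ} (hp : 1 < p) (hM : 0 ≤ M) :
    (1 - p⁻¹ + 1) * (2 * M / (1 - p⁻¹)) ^ ((1 - p⁻¹) / (1 - p⁻¹ + 1)) * V ^ (1 / (1 - p⁻¹ + 1)) =
      2 ^ ((p - 1) / (2 * p - 1)) * (2 * p - 1) /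
          ((p - 1) ^ ((p - 1) / (2 * p - 1)) * p ^ (p / (2 * p - 1))) *
        M ^ ((p - 1) / (2 * p - 1)) * V ^ (p / (2 * p - 1)) := by
  have hp0 : 0 < p := by linarith
  have hp1 : 0 < p - 1 := by linarith
  have hp2 : 0 < 2 * p - 1 := by linarith
  have hr : 1 - p⁻¹ = (p - 1) / p := by field_simp
  have hr1 : 1 - p⁻¹ + 1 = (2 * p - 1) / p := by field_simp; ring
  have hpa : p ^ ((p - 1) / (2 * p - 1)) = p / p ^ (p / (2 * p - 1)) := by
    rw [show (p - 1) / (2 * p - 1) = 1 - p / (2 * p - 1) by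
        rw [eq_sub_iff_add_eq, ← add_div, div_eq_one_iff_eq hp2.ne']; ring,
      Real.rpow_sub hp0, Real.rpow_one]
  rw [hr1, hr, div_div_div_cancel_right₀ hp0.ne', one_div_div, div_div_eq_mul_div,
    Real.div_rpow (by positivity) hp1.le, Real.mul_rpow (by positivity) hp0.le,
    Real.mul_rpow zero_le_two hM, hpa]
  field_simp

theorem landau_inf_p_general
    (J : Set ℝ) (hJ : J.OrdConnected) (hJu : ¬ Bornology.IsBounded J)
    (g g' g'' : ℝ → ℝ) (p : ℝ) (hp : 1 < p)
    (hderiv : ∀ x ∈ J, HasDerivWithinAt g (g' x) J x)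
    (hftc : ∀ a ∈ J, ∀ b ∈ J, g' b - g' a = ∫ t in a..b, g'' t)
    (hg'' : MemLp g'' (ENNReal.ofReal p) (volume.restrict J))
    (hg : MemLp g ⊤ (volume.restrict J)) :
    MemLp g' ⊤ (volume.restrict J) ∧
      (eLpNorm g' ⊤ (volume.restrict J)).toReal ≤
        2 ^ ((p - 1) / (2 * p - 1)) * (2 * p - 1) /
            ((p - 1) ^ ((p - 1) / (2 * p - 1)) * p ^ (p / (2 * p - 1))) *
          (eLpNorm g ⊤ (volume.restrict J)).toReal ^ ((p - 1) / (2 * p - 1)) *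
            (eLpNorm g'' (ENNReal.ofReal p) (volume.restrict J)).toReal ^ (p / (2 * p - 1)) := by
  set M := (eLpNorm g ⊤ (volume.restrict J)).toReal
  set V := (eLpNorm g'' (ENNReal.ofReal p) (volume.restrict J)).toReal
  have hJc : Convex ℝ J := convex_iff_ordConnected.mpr hJ
  have hJU : volume.restrict J = volume.restrict (interior J) :=
    Measure.restrict_congr_set (interior_ae_eq_of_null_frontier (hJc.addHaar_frontier volume)).symm
  have hU_ae : ∀ᵐ x ∂volume.restrict J, x ∈ interior J :=
    hJU ▸ ae_restrict_mem isOpen_interior.measurableSet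
  have hg'U : ∀ x ∈ interior J, HasDerivAt g (g' x) x := fun x hx =>
    (hderiv x (interior_subset hx)).hasDerivAt (mem_interior_iff_mem_nhds.mp hx)
  have hgM : ∀ x ∈ interior J, ‖g x‖ ≤ M :=
    ContinuousOn.norm_le_of_ae_restrict_norm_le (μ := volume)
      (fun x hx => (hg'U x hx).continuousAt.continuousWithinAt) isOpen_interior
      (by rw [← hJU]; exact hg.ae_norm_le_toReal_eLpNorm_top)
  have hbound : ∀ h, 0 < h →
      ∀ᵐ x ∂volume.restrict J, ‖g' x‖ ≤ 2 * M / h + V * h ^ (1 - p⁻¹) := by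
    intro h hh
    filter_upwards [hU_ae] with x hx
    exact abs_le_two_mul_div_add_mul_rpow (convex_iff_ordConnected.mp hJc.interior)
      (hJ.not_isBounded_interior hJu) hg'U hgM
      (fun u v huv hsub _ hx _ hy => abs_sub_le_eLpNorm_mul_rpow_of_eq_intervalIntegral hp.le
        hftc hg'' huv (hsub.trans interior_subset) hx hy) hx hh
  have hmeas : AEStronglyMeasurable g' (volume.restrict J) := by
    refine (measurable_deriv g).aestronglyMeasurable.congr ?_
    filter_upwards [hU_ae] with x hx using (hg'U x hx).deriv
  refine ⟨memLp_top_of_bound hmeas _ (hbound 1 one_pos), ?_⟩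
  rw [← landau_constant_eq hp ENNReal.toReal_nonneg]
  refine le_of_forall_le_div_add_mul_rpow (by positivity) ENNReal.toReal_nonneg
    (by simp [inv_lt_one_of_one_lt₀ hp]) fun h hh => ?_
  exact ENNReal.toReal_le_of_le_ofReal (by positivity)
    (by rw [eLpNorm_exponent_top]; exact eLpNormEssSup_le_of_ae_bound (hbound h hh))

/-- **Corollary.** If `g : J → ℝ` (with `J` an unbounded interval) has a derivative `g'` that
is locally absolutely continuous with a.e. derivative `g''`, and `g ∈ L^∞(J)`,
`g'' ∈ L^p(J)` for some `p > 1`, then `g' ∈ L^∞(J)` and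
`‖g'‖_{J,∞} ≤ (2^{(p-1)/(2p-1)} (2p-1)/((p-1)^{(p-1)/(2p-1)} p^{p/(2p-1)}))
  ‖g‖_{J,∞}^{(p-1)/(2p-1)} ‖g''‖_{J,p}^{p/(2p-1)}`. -/
theorem landau_inf_p
    (J : Set ℝ) (hJ : J.OrdConnected) (hJu : ¬ Bornology.IsBounded J)
    (g g' g'' : ℝ → ℝ) (p : ℝ) (hp : 1 < p)
    (hderiv : ∀ x ∈ J, HasDerivWithinAt g (g' x) J x)
    (hint : ∀ a ∈ J, ∀ b ∈ J, IntervalIntegrable g'' volume a b)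
    (hftc : ∀ a ∈ J, ∀ b ∈ J, g' b - g' a = ∫ t in a..b, g'' t)
    (hg'' : MemLp g'' (ENNReal.ofReal p) (volume.restrict J))
    (hg : MemLp g ⊤ (volume.restrict J)) :
    MemLp g' ⊤ (volume.restrict J) ∧
      (eLpNorm g' ⊤ (volume.restrict J)).toReal ≤
        2 ^ ((p - 1) / (2 * p - 1)) * (2 * p - 1) /
            ((p - 1) ^ ((p - 1) / (2 * p - 1)) * p ^ (p / (2 * p - 1))) *
          (eLpNorm g ⊤ (volume.restrict J)).toReal ^ ((p - 1) / (2 * p - 1)) *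
            (eLpNorm g'' (ENNReal.ofReal p) (volume.restrict J)).toReal ^ (p / (2 * p - 1)) :=
  landau_inf_p_general J hJ hJu g g' g'' p hp hderiv hftc hg'' hg
end

section
/- Let J be an unbounded subinterval of ℝ and g : J → ℝ such that g′ exists and is locally absolutely continuous on J, with second derivative g″ ∈ L^∞(J). If g′ ∈ L^1(J), then g′ ∈ L^∞(J) and ‖g′‖_{J,∞} ≤ 2·‖g′‖_{J,1}^{1/2}·‖g″‖_{J,∞}^{1/2}. -/
open MeasureTheory Set

/-!
The bound on `g''` makes `g'` `M`-Lipschitz on `J`, with `M = ‖g''‖_∞`. Since `J` is unbounded,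
every `x ∈ J` is an endpoint of an interval of any length `L` inside `J`, on which
`|g' t| ≥ |g' x| - M |t - x|`; integrating gives `|g' x| L - M L² / 2 ≤ ‖g'‖₁` for all `L ≥ 0`,
and the choice `L = |g' x| / M` yields `|g' x|² ≤ 2 ‖g'‖₁ M`.
-/

lemma abs_sub_le_mul_abs_sub_of_integral_eq {J : Set ℝ} (hJ : J.OrdConnected) {f f' : ℝ → ℝ}
    {M : ℝ} (hftc : ∀ a ∈ J, ∀ b ∈ J, f b - f a = ∫ t in a..b, f' t)
    (hM : ∀ᵐ t ∂volume.restrict J, |f' t| ≤ M) {a b : ℝ} (ha : a ∈ J) (hb : b ∈ J) :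
    |f b - f a| ≤ M * |b - a| := by
  have hM' : ∀ᵐ t ∂volume.restrict (uIoc a b), ‖f' t‖ ≤ M :=
    ae_restrict_of_ae_restrict_of_subset (uIoc_subset_uIcc.trans (hJ.uIcc_subset ha hb)) hM
  rw [hftc a ha b hb, ← Real.norm_eq_abs]
  exact intervalIntegral.norm_integral_le_of_norm_le_const_ae
    ((ae_restrict_iff' measurableSet_uIoc).1 hM')

lemma abs_mul_sub_le_integral_abs_of_lipschitz_right {f : ℝ → ℝ} {M x L : ℝ} (hL : 0 ≤ L)
    (hf : IntervalIntegrable f volume x (x + L))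
    (hlip : ∀ t ∈ Icc x (x + L), |f t - f x| ≤ M * |t - x|) :
    |f x| * L - M * L ^ 2 / 2 ≤ ∫ t in x..x + L, |f t| := by
  have hlower : ∀ t ∈ Icc x (x + L), |f x| - M * (t - x) ≤ |f t| := fun t ht => by
    have := hlip t ht
    rw [abs_of_nonneg (sub_nonneg.2 ht.1)] at this
    linarith [abs_sub_abs_le_abs_sub (f x) (f t), abs_sub_comm (f x) (f t)]
  calc |f x| * L - M * L ^ 2 / 2 = ∫ t in x..x + L, (|f x| - M * (t - x)) := by
        rw [intervalIntegral.integral_sub intervalIntegrable_const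
          ((by fun_prop : Continuous fun t => M * (t - x)).intervalIntegrable _ _),
          intervalIntegral.integral_const_mul,
          intervalIntegral.integral_comp_sub_right (fun t => t)]
        simp
        ring
    _ ≤ ∫ t in x..x + L, |f t| :=
        intervalIntegral.integral_mono_on (by linarith)
          ((by fun_prop : Continuous fun t => |f x| - M * (t - x)).intervalIntegrable _ _)
          hf.abs hlower

lemma abs_mul_sub_le_integral_abs_of_lipschitz_left {f : ℝ → ℝ} {M x L : ℝ} (hL : 0 ≤ L)
    (hf : IntervalIntegrable f volume (x - L) x)
    (hlip : ∀ t ∈ Icc (x - L) x, |f t - f x| ≤ M * |t - x|) :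
    |f x| * L - M * L ^ 2 / 2 ≤ ∫ t in x - L..x, |f t| := by
  have hf' : IntervalIntegrable (fun t => f (-t)) volume (-x) (-x + L) := by
    simpa [sub_eq_neg_add] using ((IntervalIntegrable.iff_comp_neg (by simp)).1 hf).symm
  have := abs_mul_sub_le_integral_abs_of_lipschitz_right (f := fun t => f (-t)) hL hf'
    fun t ht => by
      simpa [abs_sub_comm, add_comm] using hlip (-t) ⟨by linarith [ht.2], by linarith [ht.1]⟩
  simpa [intervalIntegral.integral_comp_neg (fun t => |f t|), sub_eq_neg_add] using this

lemma Set.OrdConnected.Icc_add_subset_or_Icc_sub_subset {J : Set ℝ} (hJ : J.OrdConnected)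
    (hJu : ¬ Bornology.IsBounded J) {x : ℝ} (hx : x ∈ J) (L : ℝ) :
    Icc x (x + L) ⊆ J ∨ Icc (x - L) x ⊆ J := by
  rw [isBounded_iff_bddBelow_bddAbove, not_and_or] at hJu
  rcases hJu with hbelow | habove
  · obtain ⟨y, hy, hyx⟩ := not_bddBelow_iff.1 hbelow (x - L)
    exact .inr ((Icc_subset_Icc_left hyx.le).trans (hJ.out hy hx))
  · obtain ⟨y, hy, hxy⟩ := not_bddAbove_iff.1 habove (x + L)
    exact .inl ((Icc_subset_Icc_right hxy.le).trans (hJ.out hx hy))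

lemma intervalIntegral_abs_le_setIntegral_abs {J : Set ℝ} {f : ℝ → ℝ} (hf : IntegrableOn f J)
    {a b : ℝ} (hab : a ≤ b) (hsub : Icc a b ⊆ J) :
    ∫ t in a..b, |f t| ≤ ∫ t in J, |f t| := by
  rw [intervalIntegral.integral_of_le hab]
  exact setIntegral_mono_set hf.abs (.of_forall fun _ => abs_nonneg _)
    (Ioc_subset_Icc_self.trans hsub).eventuallyLE

lemma abs_mul_sub_le_setIntegral_abs {J : Set ℝ} (hJ : J.OrdConnected)
    (hJu : ¬ Bornology.IsBounded J) {f : ℝ → ℝ} {M : ℝ} (hf : IntegrableOn f J)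
    (hlip : ∀ a ∈ J, ∀ b ∈ J, |f b - f a| ≤ M * |b - a|) {x : ℝ} (hx : x ∈ J) {L : ℝ}
    (hL : 0 ≤ L) :
    |f x| * L - M * L ^ 2 / 2 ≤ ∫ t in J, |f t| := by
  rcases hJ.Icc_add_subset_or_Icc_sub_subset hJu hx L with hsub | hsub
  · have hxL : x ≤ x + L := by linarith
    refine (abs_mul_sub_le_integral_abs_of_lipschitz_right hL ?_ fun t ht => ?_).trans
      (intervalIntegral_abs_le_setIntegral_abs hf hxL hsub)
    · exact (intervalIntegrable_iff_integrableOn_Icc_of_le hxL).2 (hf.mono_set hsub)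
    · exact hlip x hx t (hsub ht)
  · have hxL : x - L ≤ x := by linarith
    refine (abs_mul_sub_le_integral_abs_of_lipschitz_left hL ?_ fun t ht => ?_).trans
      (intervalIntegral_abs_le_setIntegral_abs hf hxL hsub)
    · exact (intervalIntegrable_iff_integrableOn_Icc_of_le hxL).2 (hf.mono_set hsub)
    · exact hlip x hx t (hsub ht)

lemma le_two_mul_sqrt_mul_sqrt_of_forall_mul_sub_le {c A M : ℝ} (hc : 0 ≤ c) (hM : 0 ≤ M)
    (h : ∀ L, 0 ≤ L → c * L - M * L ^ 2 / 2 ≤ A) :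
    c ≤ 2 * √A * √M := by
  have hA : 0 ≤ A := by simpa using h 0 le_rfl
  rcases hM.eq_or_lt with rfl | hM
  · by_contra! hc
    have := h ((A + 1) / c) (by positivity)
    rw [Real.sqrt_zero, mul_zero] at hc
    rw [zero_mul, zero_div, sub_zero, mul_div_cancel₀ _ hc.ne'] at this
    linarith
  · have hsq : c ^ 2 ≤ 2 * A * M := by
      have := h (c / M) (by positivity)
      field_simp at this
      nlinarith
    rw [← pow_le_pow_iff_left₀ hc (by positivity) two_ne_zero, mul_pow, mul_pow,
      Real.sq_sqrt hA, Real.sq_sqrt hM.le]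
    nlinarith

lemma abs_le_two_mul_sqrt_setIntegral_abs_mul_sqrt {J : Set ℝ} (hJ : J.OrdConnected)
    (hJu : ¬ Bornology.IsBounded J) {f : ℝ → ℝ} {M : ℝ} (hM : 0 ≤ M) (hf : IntegrableOn f J)
    (hlip : ∀ a ∈ J, ∀ b ∈ J, |f b - f a| ≤ M * |b - a|) {x : ℝ} (hx : x ∈ J) :
    |f x| ≤ 2 * √(∫ t in J, |f t|) * √M :=
  le_two_mul_sqrt_mul_sqrt_of_forall_mul_sub_le (abs_nonneg _) hM fun _ hL =>
    abs_mul_sub_le_setIntegral_abs hJ hJu hf hlip hx hL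

theorem landau_one_inf_general
    (J : Set ℝ) (hJ : J.OrdConnected) (hJu : ¬ Bornology.IsBounded J)
    (g' g'' : ℝ → ℝ)
    (hftc : ∀ a ∈ J, ∀ b ∈ J, g' b - g' a = ∫ t in a..b, g'' t)
    (hg'' : MemLp g'' ⊤ (volume.restrict J))
    (hg'1 : MemLp g' 1 (volume.restrict J)) :
    MemLp g' ⊤ (volume.restrict J) ∧
      (eLpNorm g' ⊤ (volume.restrict J)).toReal ≤
        2 * (eLpNorm g' 1 (volume.restrict J)).toReal ^ ((1 : ℝ) / 2) *
          (eLpNorm g'' ⊤ (volume.restrict J)).toReal ^ ((1 : ℝ) / 2) := by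
  have hg''_le : ∀ᵐ t ∂volume.restrict J, |g'' t| ≤ lpNorm g'' ⊤ (volume.restrict J) :=
    ae_le_lpNorm_exponent_top hg''
  have hL1 : lpNorm g' 1 (volume.restrict J) = ∫ t in J, |g' t| :=
    lpNorm_one_eq_integral_norm hg'1.1
  have hbound : ∀ x ∈ J, ‖g' x‖ ≤ 2 * √(lpNorm g' 1 (volume.restrict J)) *
      √(lpNorm g'' ⊤ (volume.restrict J)) := fun x hx => hL1 ▸
    abs_le_two_mul_sqrt_setIntegral_abs_mul_sqrt hJ hJu lpNorm_nonneg
      (memLp_one_iff_integrable.1 hg'1)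
      (fun _ ha _ hb => abs_sub_le_mul_abs_sub_of_integral_eq hJ hftc hg''_le ha hb) hx
  have hae := ae_restrict_of_forall_mem (μ := volume) hJ.measurableSet hbound
  refine ⟨memLp_top_of_bound hg'1.1 _ hae, ?_⟩
  rw [toReal_eLpNorm (p := 1) hg'1.1, toReal_eLpNorm hg''.1, ← Real.sqrt_eq_rpow,
    ← Real.sqrt_eq_rpow]
  refine ENNReal.toReal_le_of_le_ofReal (by positivity) ?_
  rw [eLpNorm_exponent_top]
  exact eLpNormEssSup_le_of_ae_bound hae

/-- **Corollary.** If `g : J → ℝ` (with `J` an unbounded interval) has a derivative `g'` that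
is locally absolutely continuous with a.e. derivative `g''`, `g'' ∈ L^∞(J)` and
`g' ∈ L^1(J)`, then `g' ∈ L^∞(J)` and
`‖g'‖_{J,∞} ≤ 2 ‖g'‖_{J,1}^{1/2} ‖g''‖_{J,∞}^{1/2}`. -/
theorem landau_one_inf
    (J : Set ℝ) (hJ : J.OrdConnected) (hJu : ¬ Bornology.IsBounded J)
    (g g' g'' : ℝ → ℝ)
    (hderiv : ∀ x ∈ J, HasDerivWithinAt g (g' x) J x)
    (hint : ∀ a ∈ J, ∀ b ∈ J, IntervalIntegrable g'' volume a b)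
    (hftc : ∀ a ∈ J, ∀ b ∈ J, g' b - g' a = ∫ t in a..b, g'' t)
    (hg'' : MemLp g'' ⊤ (volume.restrict J))
    (hg'1 : MemLp g' 1 (volume.restrict J)) :
    MemLp g' ⊤ (volume.restrict J) ∧
      (eLpNorm g' ⊤ (volume.restrict J)).toReal ≤
        2 * (eLpNorm g' 1 (volume.restrict J)).toReal ^ ((1 : ℝ) / 2) *
          (eLpNorm g'' ⊤ (volume.restrict J)).toReal ^ ((1 : ℝ) / 2) :=
  landau_one_inf_general J hJ hJu g' g'' hftc hg'' hg'1
end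

section
/- Let J be an unbounded subinterval of ℝ and g : J → ℝ a locally absolutely continuous function with derivative g′ ∈ L^α(J) for some α > 1, and suppose the total variation of g′ on the interval with endpoints a and b is at most V_J·|b − a|^r for all a, b ∈ J, where V_J > 0 and r ∈ (0,1]. Then for every b ∈ J and every λ > 0, |g′(b)| ≤ ‖g′‖_{J,α}/λ^{1/α} + V_J·λ^r (using that, since J is unbounded, for every b ∈ J and λ > 0 there exists a ∈ J with |b − a| = λ, together with Hölder's inequality |g(b) − g(a)| ≤ |b − a|^{1/β}‖g′‖_{J,α} with 1/α + 1/β = 1). -/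
/-!
Averaging instead of integrating `g'`: the variation bound keeps `|g'|` above `|g'(b)| - V λ^r`
on an interval of length `λ` through `b`, which fits inside `J` because `J` is unbounded, and the
`L^α` norm of `g'` over that interval is at least this lower bound times `λ^{1/α}`.
-/

open MeasureTheory Set

open scoped ENNReal

theorem Set.OrdConnected.exists_Icc_subset_of_not_isBounded {J : Set ℝ} (hJ : J.OrdConnected)
    (hJu : ¬ Bornology.IsBounded J) {b : ℝ} (hb : b ∈ J) {l : ℝ} (hl : 0 ≤ l) :
    ∃ x, b ∈ Icc x (x + l) ∧ Icc x (x + l) ⊆ J := by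
  rw [isBounded_iff_bddBelow_bddAbove, not_and_or] at hJu
  rcases hJu with hbelow | habove
  · obtain ⟨c, hcJ, hc⟩ := not_bddBelow_iff.mp hbelow (b - l)
    refine ⟨b - l, ⟨by linarith, by linarith⟩, ?_⟩
    exact (Icc_subset_Icc hc.le (by linarith)).trans (hJ.out hcJ hb)
  · obtain ⟨c, hcJ, hc⟩ := not_bddAbove_iff.mp habove (b + l)
    exact ⟨b, ⟨le_rfl, by linarith⟩, (Icc_subset_Icc le_rfl hc.le).trans (hJ.out hb hcJ)⟩

theorem dist_le_of_eVariationOn_uIcc_le {ι E : Type*} [LinearOrder ι] [PseudoMetricSpace E]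
    {f : ι → E} {a b : ι} {D : ℝ} (hD : 0 ≤ D)
    (h : eVariationOn f (uIcc a b) ≤ ENNReal.ofReal D) : dist (f a) (f b) ≤ D :=
  (edist_le_ofReal hD).mp <| (eVariationOn.edist_le f left_mem_uIcc right_mem_uIcc).trans h

section LowerBound

variable {α E : Type*} [MeasurableSpace α] {μ : Measure α} [NormedAddCommGroup E] {f : α → E}
  {s : Set α} {p : ℝ≥0∞}

theorem mul_measure_rpow_le_eLpNorm_of_forall_le_enorm (hs : MeasurableSet s) (hp₀ : p ≠ 0)
    (hp : p ≠ ∞) {c : ℝ≥0∞} (hc : ∀ x ∈ s, c ≤ ‖f x‖ₑ) :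
    c * μ s ^ (1 / p.toReal) ≤ eLpNorm f p μ :=
  calc c * μ s ^ (1 / p.toReal) = eLpNorm (fun _ ↦ c) p (μ.restrict s) := by
        rw [eLpNorm_const' c hp₀ hp, Measure.restrict_apply_univ, enorm_eq_self]
    _ ≤ eLpNorm f p (μ.restrict s) := eLpNorm_mono_enorm_ae (ae_restrict_of_forall_mem hs hc)
    _ ≤ eLpNorm f p μ := eLpNorm_restrict_le f p μ s

theorem mul_toReal_measure_rpow_le_toReal_eLpNorm_of_forall_le_norm (hs : MeasurableSet s)
    (hp₀ : p ≠ 0) (hp : p ≠ ∞) (hf : eLpNorm f p μ ≠ ∞) {c : ℝ} (hc : ∀ x ∈ s, c ≤ ‖f x‖) :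
    c * (μ s).toReal ^ (1 / p.toReal) ≤ (eLpNorm f p μ).toReal := by
  rcases le_or_gt c 0 with hc₀ | hc₀
  · exact (mul_nonpos_of_nonpos_of_nonneg hc₀ (by positivity)).trans ENNReal.toReal_nonneg
  have hofReal : ∀ x ∈ s, ENNReal.ofReal c ≤ ‖f x‖ₑ := fun x hx ↦
    ofReal_norm (f x) ▸ ENNReal.ofReal_le_ofReal (hc x hx)
  have := ENNReal.toReal_mono hf
    (mul_measure_rpow_le_eLpNorm_of_forall_le_enorm (μ := μ) hs hp₀ hp hofReal)
  rwa [ENNReal.toReal_mul, ENNReal.toReal_ofReal hc₀.le, ← ENNReal.toReal_rpow] at this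

end LowerBound

theorem landau_pointwise_estimate_Lalpha_general
    (J : Set ℝ) (hJ : J.OrdConnected) (hJu : ¬ Bornology.IsBounded J)
    (g' : ℝ → ℝ) (α : ℝ) (hα : 1 < α)
    (hg'α : MemLp g' (ENNReal.ofReal α) (volume.restrict J))
    (V r : ℝ) (hV : 0 < V) (hr : r ∈ Ioc (0 : ℝ) 1)
    (hvar : ∀ a ∈ J, ∀ b ∈ J,
      eVariationOn g' (uIcc a b) ≤ ENNReal.ofReal (V * |b - a| ^ r)) :
    ∀ b ∈ J, ∀ l : ℝ, 0 < l →
      |g' b| ≤ (eLpNorm g' (ENNReal.ofReal α) (volume.restrict J)).toReal / l ^ α⁻¹ +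
        V * l ^ r := by
  intro b hb l hl
  obtain ⟨x, hbx, hxJ⟩ := hJ.exists_Icc_subset_of_not_isBounded hJu hb hl.le
  have hlower : ∀ t ∈ Icc x (x + l), |g' b| - V * l ^ r ≤ ‖g' t‖ := by
    intro t ht
    have hbt : |t - b| ≤ l := by
      simpa [Real.dist_eq] using Real.dist_le_of_mem_Icc ht hbx
    have hvar' : eVariationOn g' (uIcc b t) ≤ ENNReal.ofReal (V * l ^ r) :=
      (hvar b hb t (hxJ ht)).trans <| ENNReal.ofReal_le_ofReal <| by gcongr; exact hr.1.le
    have := dist_le_of_eVariationOn_uIcc_le (by positivity) hvar'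
    rw [Real.dist_eq] at this
    linarith [abs_sub_abs_le_abs_sub (g' b) (g' t), Real.norm_eq_abs (g' t)]
  have hα₀ : 0 < α := one_pos.trans hα
  have hvol : (volume.restrict J (Icc x (x + l))).toReal = l := by
    rw [Measure.restrict_apply measurableSet_Icc, inter_eq_left.mpr hxJ, Real.volume_Icc,
      add_sub_cancel_left, ENNReal.toReal_ofReal hl.le]
  have key := mul_toReal_measure_rpow_le_toReal_eLpNorm_of_forall_le_norm measurableSet_Icc
    (by simpa using hα₀) ENNReal.ofReal_ne_top hg'α.eLpNorm_ne_top hlower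
  rw [hvol, ENNReal.toReal_ofReal hα₀.le, one_div, ← le_div_iff₀ (by positivity)] at key
  linarith

/-- The key pointwise estimate of Theorem 5: for every `b ∈ J` and `λ > 0`,
`|g'(b)| ≤ ‖g'‖_{J,α}/λ^{1/α} + V λ^r`. -/
theorem landau_pointwise_estimate_Lalpha
    (J : Set ℝ) (hJ : J.OrdConnected) (hJu : ¬ Bornology.IsBounded J)
    (g g' : ℝ → ℝ) (α : ℝ) (hα : 1 < α)
    (hderiv : ∀ x ∈ J, HasDerivWithinAt g (g' x) J x)
    (hg'α : MemLp g' (ENNReal.ofReal α) (volume.restrict J))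
    (V r : ℝ) (hV : 0 < V) (hr : r ∈ Ioc (0 : ℝ) 1)
    (hvar : ∀ a ∈ J, ∀ b ∈ J,
      eVariationOn g' (uIcc a b) ≤ ENNReal.ofReal (V * |b - a| ^ r)) :
    ∀ b ∈ J, ∀ l : ℝ, 0 < l →
      |g' b| ≤ (eLpNorm g' (ENNReal.ofReal α) (volume.restrict J)).toReal / l ^ α⁻¹ +
        V * l ^ r :=
  landau_pointwise_estimate_Lalpha_general J hJ hJu g' α hα hg'α V r hV hr hvar
end
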